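/- arXiv:1507.01196 — 2 statements merged into one kernel-verified Lean document; each statement's English description precedes it below -/
import Mathlib

section
/- (Expander Mixing Lemma) Let G be a d-regular graph on n vertices with adjacency matrix A, and let λ = max{λ_2, |λ_n|} where λ_1 ≥ ... ≥ λ_n are the eigenvalues of A. Then for all subsets S, T of the vertex set, | |E(S,T)| − d|S||T|/n | ≤ λ√(|S||T|), where E(S,T) counts edges with one endpoint in S and one in T (edges inside S ∩ T counted twice). -/
/-!
Let `P` be the orthogonal projection onto `𝟙ᗮ`. Since `𝟙` is an eigenvector of `A` with eigenvalue
`d`, `e(S, T) = ⟪𝟙_S, A 𝟙_T⟫ = d|S||T|/n + ⟪P 𝟙_S, A (P 𝟙_T)⟫`. Expand in an orthonormal eigenbasis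
`(uᵢ, μᵢ)` of `A`. An eigenvalue with `|μᵢ| > λ` must be strictly the largest one, and as `d` is the
largest eigenvalue (the Laplacian `d - A` is positive semidefinite) `𝟙` is then a multiple of `uᵢ`,
so `⟪uᵢ, P 𝟙_S⟫ = 0`. Hence `|⟪P 𝟙_S, A (P 𝟙_T)⟫| ≤ λ ‖P 𝟙_S‖ ‖P 𝟙_T‖ ≤ λ √(|S||T|)` by
Cauchy–Schwarz.
-/

open Finset Matrix
open scoped RealInnerProductSpace

namespace OrthonormalBasis

variable {ι E : Type*} [Fintype ι] [NormedAddCommGroup E] [InnerProductSpace ℝ E]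

theorem sum_abs_inner_mul_abs_inner_le (b : OrthonormalBasis ι ℝ E) (x y : E) :
    ∑ i, |⟪b i, x⟫| * |⟪b i, y⟫| ≤ ‖x‖ * ‖y‖ := by
  calc ∑ i, |⟪b i, x⟫| * |⟪b i, y⟫|
      ≤ √(∑ i, |⟪b i, x⟫| ^ 2) * √(∑ i, |⟪b i, y⟫| ^ 2) :=
        Real.sum_mul_le_sqrt_mul_sqrt _ _ _
    _ = ‖x‖ * ‖y‖ := by
        simp only [sq_abs, b.sum_sq_inner_right, Real.sqrt_sq (norm_nonneg _)]

variable {T : E →ₗ[ℝ] E} (b : OrthonormalBasis ι ℝ E) {μ : ι → ℝ}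

theorem inner_map_eq_sum_eigenvalues (hT : T.IsSymmetric) (hb : ∀ i, T (b i) = μ i • b i)
    (x y : E) :
    ⟪x, T y⟫ = ∑ i, μ i * (⟪b i, x⟫ * ⟪b i, y⟫) := by
  rw [← b.sum_inner_mul_inner x (T y)]
  refine sum_congr rfl fun i _ => ?_
  rw [← hT, hb, real_inner_smul_left, real_inner_comm x]
  ring

theorem abs_inner_map_le (hT : T.IsSymmetric) (hb : ∀ i, T (b i) = μ i • b i) {lam : ℝ}
    (hlam : 0 ≤ lam) {x : E} (hx : ∀ i, lam < |μ i| → ⟪b i, x⟫ = 0) (y : E) :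
    |⟪x, T y⟫| ≤ lam * (‖x‖ * ‖y‖) := by
  rw [b.inner_map_eq_sum_eigenvalues hT hb]
  calc |∑ i, μ i * (⟪b i, x⟫ * ⟪b i, y⟫)|
      ≤ ∑ i, |μ i * (⟪b i, x⟫ * ⟪b i, y⟫)| := abs_sum_le_sum_abs _ _
    _ ≤ ∑ i, lam * (|⟪b i, x⟫| * |⟪b i, y⟫|) := by
        refine sum_le_sum fun i _ => ?_
        rw [abs_mul, abs_mul]
        rcases le_or_gt |μ i| lam with hμ | hμ
        · exact mul_le_mul_of_nonneg_right hμ (by positivity)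
        · simp [hx i hμ]
    _ = lam * ∑ i, |⟪b i, x⟫| * |⟪b i, y⟫| := (mul_sum _ _ _).symm
    _ ≤ lam * (‖x‖ * ‖y‖) := by gcongr; exact b.sum_abs_inner_mul_abs_inner_le x y

theorem inner_eq_zero_of_eigenvalue_ne (hT : T.IsSymmetric) (hb : ∀ i, T (b i) = μ i • b i)
    {v : E} {d : ℝ} (hv : T v = d • v) {j : ι} (hj : μ j ≠ d) : ⟪b j, v⟫ = 0 := by
  have h : μ j * ⟪b j, v⟫ = d * ⟪b j, v⟫ := by
    rw [← real_inner_smul_left, ← hb, hT, hv, real_inner_smul_right]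
  by_contra h0
  exact hj (mul_right_cancel₀ h0 h)

theorem inner_eq_zero_of_forall_eigenvalue_ne (hT : T.IsSymmetric)
    (hb : ∀ i, T (b i) = μ i • b i) {v : E} (hv0 : v ≠ 0) {d : ℝ} (hv : T v = d • v)
    {i : ι} (hi : ∀ j ≠ i, μ j ≠ d) {x : E} (hx : ⟪v, x⟫ = 0) : ⟪b i, x⟫ = 0 := by
  have hv_eq : v = ⟪b i, v⟫ • b i := by
    conv_lhs => rw [← b.sum_repr' v]
    refine sum_eq_single i (fun j _ hj => ?_) (by simp)
    rw [b.inner_eq_zero_of_eigenvalue_ne hT hb hv (hi j hj), zero_smul]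
  have hvi : ⟪b i, v⟫ ≠ 0 := fun h => hv0 (by rw [hv_eq, h, zero_smul])
  rw [hv_eq, real_inner_smul_left] at hx
  exact (mul_eq_zero.mp hx).resolve_left hvi

end OrthonormalBasis

namespace LinearMap.IsSymmetric

variable {E : Type*} [NormedAddCommGroup E] [InnerProductSpace ℝ E] {T : E →ₗ[ℝ] E}

theorem inner_starProjection_map_starProjection (hT : T.IsSymmetric) {v : E} {d : ℝ}
    (hv : T v = d • v) (a c : E) :
    ⟪(ℝ ∙ v)ᗮ.starProjection a, T ((ℝ ∙ v)ᗮ.starProjection c)⟫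
      = ⟪a, T c⟫ - d * ⟪v, a⟫ * ⟪v, c⟫ / ‖v‖ ^ 2 := by
  have hTv : ∀ w, ⟪v, T w⟫ = d * ⟪v, w⟫ := fun w => by
    rw [← hT, hv, real_inner_smul_left]
  rcases eq_or_ne v 0 with rfl | hv0
  · simp [Submodule.starProjection_top]
  have hnorm : ‖v‖ ^ 2 ≠ 0 := by positivity
  simp only [Submodule.starProjection_orthogonal, _root_.sub_apply, ContinuousLinearMap.id_apply,
    Submodule.starProjection_singleton, Real.ringHom_apply, map_sub, map_smul, hv, inner_sub_left,
    inner_sub_right, real_inner_smul_left, real_inner_smul_right, hTv, real_inner_self_eq_norm_sq,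
    real_inner_comm a v]
  field_simp
  ring

end LinearMap.IsSymmetric

namespace EuclideanSpace

variable {ι : Type*} [Fintype ι] [DecidableEq ι]

def indicator (S : Finset ι) : EuclideanSpace ℝ ι :=
  WithLp.toLp 2 fun i => if i ∈ S then 1 else 0

theorem inner_indicator_indicator (S T : Finset ι) :
    ⟪indicator S, indicator T⟫ = #(S ∩ T) := by
  simp [indicator, inner_toLp_toLp, dotProduct, ← Finset.filter_mem_eq_inter]

theorem norm_indicator (S : Finset ι) : ‖indicator S‖ = √(#S : ℝ) := by
  rw [norm_eq_sqrt_real_inner, inner_indicator_indicator, inter_self]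

theorem inner_indicator_toEuclideanLin_indicator (M : Matrix ι ι ℝ) (S T : Finset ι) :
    ⟪indicator S, toEuclideanLin M (indicator T)⟫ = ∑ s ∈ S, ∑ t ∈ T, M s t := by
  simp [indicator, inner_toLp_toLp, dotProduct, mulVec, Finset.sum_ite_mem]

end EuclideanSpace

open EuclideanSpace

namespace Matrix.IsHermitian

variable {ι : Type*} [Fintype ι] [DecidableEq ι] {A : Matrix ι ι ℝ}

theorem toEuclideanLin_eigenvectorBasis (hA : A.IsHermitian) (i : ι) :
    toEuclideanLin A (hA.eigenvectorBasis i) = hA.eigenvalues i • hA.eigenvectorBasis i := by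
  ext1
  simp [hA.mulVec_eigenvectorBasis]

end Matrix.IsHermitian

namespace SimpleGraph.IsRegularOfDegree

variable {V : Type*} [Fintype V] [DecidableEq V] {G : SimpleGraph V} [DecidableRel G.Adj] {d : ℕ}

theorem toEuclideanLin_adjMatrix_indicator_univ (hreg : G.IsRegularOfDegree d) :
    toEuclideanLin (G.adjMatrix ℝ) (indicator univ) = (d : ℝ) • indicator univ := by
  ext1 v
  simpa [indicator] using adjMatrix_mulVec_const_apply_of_regular (a := (1 : ℝ)) hreg (v := v)

theorem eigenvalues_adjMatrix_le (hreg : G.IsRegularOfDegree d)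
    (hA : (G.adjMatrix ℝ).IsHermitian) (i : V) : hA.eigenvalues i ≤ d := by
  have hLu : G.lapMatrix ℝ *ᵥ ⇑(hA.eigenvectorBasis i)
      = ((d : ℝ) - hA.eigenvalues i) • ⇑(hA.eigenvectorBasis i) := by
    rw [lapMatrix, sub_mulVec, hA.mulVec_eigenvectorBasis]
    ext v
    simp [degMatrix_mulVec_apply, hreg v, sub_mul]
  have hunit : star ⇑(hA.eigenvectorBasis i) ⬝ᵥ ⇑(hA.eigenvectorBasis i) = 1 := by
    rw [dotProduct_comm, ← inner_eq_star_dotProduct, real_inner_self_eq_norm_sq,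
      hA.eigenvectorBasis.orthonormal.1 i, one_pow]
  have := (G.posSemidef_lapMatrix ℝ).dotProduct_mulVec_nonneg (hA.eigenvectorBasis i)
  rwa [hLu, dotProduct_smul, hunit, smul_eq_mul, mul_one, sub_nonneg] at this

end SimpleGraph.IsRegularOfDegree

theorem lt_of_max_lt_abs_of_antitone {n : ℕ} (hn : 1 < n) {μ : Fin n → ℝ}
    {σ : Equiv.Perm (Fin n)} (hsort : Antitone (μ ∘ σ)) {i : Fin n}
    (hi : max ((μ ∘ σ) ⟨1, hn⟩) |(μ ∘ σ) ⟨n - 1, by omega⟩| < |μ i|)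
    {j : Fin n} (hji : j ≠ i) : μ j < μ i := by
  set lam := max ((μ ∘ σ) ⟨1, hn⟩) |(μ ∘ σ) ⟨n - 1, by omega⟩|
  have hμ : ∀ k, μ k = (μ ∘ σ) (σ.symm k) := by simp
  have hsecond : ∀ k, σ.symm k ≠ ⟨0, by omega⟩ → μ k ≤ lam := fun k hk =>
    have h1k : 1 ≤ (σ.symm k).val := Nat.one_le_iff_ne_zero.mpr fun h => hk (Fin.ext h)
    (hμ k).trans_le <| (hsort (Fin.le_def.mpr h1k)).trans (le_max_left _ _)
  have hbottom : -lam ≤ μ i :=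
    calc -lam ≤ -|(μ ∘ σ) ⟨n - 1, by omega⟩| := neg_le_neg (le_max_right _ _)
      _ ≤ (μ ∘ σ) ⟨n - 1, by omega⟩ := neg_abs_le _
      _ ≤ μ i := (hsort (Fin.le_def.mpr (by simp; omega))).trans_eq (hμ i).symm
  have hlam_lt : lam < μ i := (lt_abs.mp hi).resolve_right (by linarith)
  have hσi : σ.symm i = ⟨0, by omega⟩ := by
    by_contra h
    exact (hsecond i h).not_gt hlam_lt
  exact (hsecond j fun h => hji (σ.symm.injective (h.trans hσi.symm))).trans_lt hlam_lt

/-- Expander Mixing Lemma: for a `d`-regular graph `G` on `n` vertices with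
adjacency eigenvalues `ev 0 ≥ ev 1 ≥ … ≥ ev (n-1)` and `λ = max (ev 1) |ev (n-1)|`,
for all vertex sets `S, T`, `| |E(S,T)| − d|S||T|/n | ≤ λ √(|S||T|)`,
where `|E(S,T)| = ∑_{s ∈ S, t ∈ T} A(s,t)` (edges inside `S ∩ T` counted twice). -/
theorem stmt2 (n d : ℕ) (hn : 2 ≤ n) (G : SimpleGraph (Fin n)) [DecidableRel G.Adj]
    (hreg : G.IsRegularOfDegree d)
    (hA : (G.adjMatrix ℝ).IsHermitian)
    (ev : Fin n → ℝ) (σ : Equiv.Perm (Fin n))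
    (hev : ev = hA.eigenvalues ∘ σ) (hsort : Antitone ev)
    (lam : ℝ)
    (hlam : lam = max (ev ⟨1, by omega⟩) |ev ⟨n - 1, by omega⟩|)
    (S T : Finset (Fin n)) :
    |(∑ s ∈ S, ∑ t ∈ T, G.adjMatrix ℝ s t) - d * S.card * T.card / n|
      ≤ lam * Real.sqrt (S.card * T.card) := by
  subst hev
  have hT := isSymmetric_toEuclideanLin_iff.mpr hA
  have hb := hA.toEuclideanLin_eigenvectorBasis
  have hone := hreg.toEuclideanLin_adjMatrix_indicator_univ
  have hone0 : indicator (univ : Finset (Fin n)) ≠ 0 := by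
    rw [← norm_ne_zero_iff, norm_indicator, card_univ, Fintype.card_fin, ne_eq,
      Real.sqrt_eq_zero (Nat.cast_nonneg _), Nat.cast_eq_zero]
    omega
  set P := (ℝ ∙ indicator (univ : Finset (Fin n)))ᗮ.starProjection
  have hlam0 : 0 ≤ lam := hlam ▸ le_max_of_le_right (abs_nonneg _)
  have hspec : ∀ x i, lam < |hA.eigenvalues i| → ⟪hA.eigenvectorBasis i, P x⟫ = 0 := by
    refine fun x i hi => hA.eigenvectorBasis.inner_eq_zero_of_forall_eigenvalue_ne hT hb hone0
      hone (fun j hj => ?_) (Submodule.mem_orthogonal_singleton_iff_inner_right.mp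
        (Submodule.starProjection_apply_mem _ x))
    exact ((lt_of_max_lt_abs_of_antitone hn hsort (hlam ▸ hi) hj).trans_le
      (hreg.eigenvalues_adjMatrix_le hA i)).ne
  calc |(∑ s ∈ S, ∑ t ∈ T, G.adjMatrix ℝ s t) - d * S.card * T.card / n|
      = |⟪P (indicator S), toEuclideanLin (G.adjMatrix ℝ) (P (indicator T))⟫| := by
        rw [hT.inner_starProjection_map_starProjection hone,
          inner_indicator_toEuclideanLin_indicator, inner_indicator_indicator,
          inner_indicator_indicator, norm_indicator]
        simp
    _ ≤ lam * (‖P (indicator S)‖ * ‖P (indicator T)‖) :=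
        hA.eigenvectorBasis.abs_inner_map_le hT hb hlam0 (hspec _) _
    _ ≤ lam * (‖indicator S‖ * ‖indicator T‖) := by
        gcongr <;> exact Submodule.norm_starProjection_apply_le _ _
    _ = lam * Real.sqrt (S.card * T.card) := by
        rw [norm_indicator, norm_indicator, Real.sqrt_mul (Nat.cast_nonneg _)]
end

section
/- (Discrete Cheeger inequality, easy direction) For a d-regular graph G with second-largest adjacency eigenvalue λ_2, the edge expansion satisfies h(G) ≥ (d − λ_2)/2. -/
/-!
Let `A` be the adjacency matrix and `𝟙` the all-ones vector, an eigenvector of `A` for the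
eigenvalue `d`. The test vector `v = 𝟙_S - (|S|/n) 𝟙` is orthogonal to `𝟙`. If `λ₂ < d`, then `𝟙`
lies on the top vector of an orthonormal eigenbasis, so `v` is spanned by eigenvectors with
eigenvalue at most `λ₂` and `vᵀAv ≤ λ₂ ‖v‖²`. On the other hand `vᵀAv = d ‖v‖² - |E(S, S̄)|`, since
`d I - A` is the Laplacian, which kills constants, and `‖v‖² = |S| (1 - |S|/n) ≥ |S|/2`.
-/

open scoped RealInnerProductSpace
open Matrix Finset

namespace OrthonormalBasis

variable {ι E : Type*} [Fintype ι] [NormedAddCommGroup E] [InnerProductSpace ℝ E]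
  (B : OrthonormalBasis ι ℝ E) {T : E →ₗ[ℝ] E} {μ : ι → ℝ}

theorem repr_map_of_apply_eq_smul (hT : ∀ i, T (B i) = μ i • B i) (w : E) (i : ι) :
    B.repr (T w) i = μ i * B.repr w i := by
  classical
  conv_lhs => rw [← B.sum_repr w]
  simp [map_sum, hT, B.repr_self, Pi.single_apply, mul_comm]

theorem inner_map_self_eq_sum (hT : ∀ i, T (B i) = μ i • B i) (v : E) :
    ⟪v, T v⟫ = ∑ i, μ i * B.repr v i ^ 2 := by
  rw [← B.repr.inner_map_map, PiLp.inner_apply]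
  simp [B.repr_map_of_apply_eq_smul hT, sq, mul_comm, mul_left_comm]

theorem norm_sq_eq_sum_repr_sq (v : E) : ‖v‖ ^ 2 = ∑ i, B.repr v i ^ 2 := by
  simp_rw [← B.repr.norm_map v, EuclideanSpace.norm_sq_eq, Real.norm_eq_abs, sq_abs]

theorem inner_map_self_le_of_repr_eq_zero (hT : ∀ i, T (B i) = μ i • B i) {i₀ : ι} {c : ℝ}
    (hμ : ∀ i ≠ i₀, μ i ≤ c) {v : E} (hv : B.repr v i₀ = 0) : ⟪v, T v⟫ ≤ c * ‖v‖ ^ 2 := by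
  rw [B.inner_map_self_eq_sum hT, B.norm_sq_eq_sum_repr_sq, mul_sum]
  refine sum_le_sum fun i _ => ?_
  obtain rfl | hi := eq_or_ne i i₀
  · simp [hv]
  · exact mul_le_mul_of_nonneg_right (hμ i hi) (sq_nonneg _)

theorem repr_eq_zero_of_apply_eq_smul (hT : ∀ i, T (B i) = μ i • B i) {u : E} {d : ℝ}
    (hu : T u = d • u) {i : ι} (hi : μ i ≠ d) : B.repr u i = 0 := by
  have h := B.repr_map_of_apply_eq_smul hT u i
  rw [hu, map_smul, PiLp.smul_apply, smul_eq_mul] at h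
  exact (mul_left_inj' (sub_ne_zero.mpr hi)).mp (by linear_combination -h)

/-- Since `d` differs from every `μ i` with `i ≠ i₀`, the eigenvector `u` is a multiple of `B i₀`,
so `v ⊥ u` has no `B i₀`-coordinate. -/
theorem inner_map_self_le_of_inner_eq_zero (hT : ∀ i, T (B i) = μ i • B i) {i₀ : ι} {c d : ℝ}
    (hμ : ∀ i ≠ i₀, μ i ≤ c) (hcd : c < d) {u : E} (hu : T u = d • u) (hu0 : u ≠ 0) {v : E}
    (huv : ⟪u, v⟫ = 0) : ⟪v, T v⟫ ≤ c * ‖v‖ ^ 2 := by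
  have hu_repr : ∀ i ≠ i₀, B.repr u i = 0 := fun i hi =>
    B.repr_eq_zero_of_apply_eq_smul hT hu ((hμ i hi).trans_lt hcd).ne
  have hu_repr₀ : B.repr u i₀ ≠ 0 := by
    intro h
    refine hu0 (B.repr.map_eq_zero_iff.mp (PiLp.ext fun i => ?_))
    obtain rfl | hi := eq_or_ne i i₀
    · exact h
    · exact hu_repr i hi
  have hinner : B.repr v i₀ * B.repr u i₀ = 0 := by
    rw [← huv, ← B.repr.inner_map_map, PiLp.inner_apply, sum_eq_single i₀]
    · simp
    · intro i _ hi
      simp [hu_repr i hi]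
    · simp
  exact B.inner_map_self_le_of_repr_eq_zero hT hμ
    ((mul_eq_zero.mp hinner).resolve_right hu_repr₀)

end OrthonormalBasis

theorem Matrix.IsHermitian.dotProduct_mulVec_le {n : Type*} [Fintype n] [DecidableEq n]
    {A : Matrix n n ℝ} (hA : A.IsHermitian) {i₀ : n} {c d : ℝ}
    (hμ : ∀ i ≠ i₀, hA.eigenvalues i ≤ c) (hcd : c < d) {u : n → ℝ} (hu : A *ᵥ u = d • u)
    (hu0 : u ≠ 0) {v : n → ℝ} (huv : u ⬝ᵥ v = 0) : v ⬝ᵥ A *ᵥ v ≤ c * (v ⬝ᵥ v) := by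
  have h := hA.eigenvectorBasis.inner_map_self_le_of_inner_eq_zero (T := toEuclideanLin A)
    (fun i => congrArg (WithLp.toLp 2) (hA.mulVec_eigenvectorBasis i)) hμ hcd
    (u := WithLp.toLp 2 u) (congrArg (WithLp.toLp 2) hu) (by simpa using hu0)
    (v := WithLp.toLp 2 v) (by simpa [EuclideanSpace.inner_toLp_toLp, dotProduct_comm] using huv)
  rw [← real_inner_self_eq_norm_sq, EuclideanSpace.inner_toLp_toLp,
    EuclideanSpace.inner_eq_star_dotProduct] at h
  simpa [dotProduct_comm v] using h

namespace Matrix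

section CommRing

variable {R n : Type*} [CommRing R] [Fintype n] {A : Matrix n n R} {d : R}

theorem indicator_one_dotProduct (S : Finset n) (x : n → R) :
    (S : Set n).indicator 1 ⬝ᵥ x = ∑ i ∈ S, x i := by
  classical
  simp [dotProduct, Set.indicator_apply, sum_ite_mem]

theorem indicator_one_dotProduct_one (S : Finset n) :
    (S : Set n).indicator 1 ⬝ᵥ (1 : n → R) = #S := by
  simp [indicator_one_dotProduct]

theorem indicator_one_dotProduct_self (S : Finset n) :
    (S : Set n).indicator 1 ⬝ᵥ (S : Set n).indicator (1 : n → R) = #S := by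
  rw [indicator_one_dotProduct, sum_congr rfl fun i hi => Set.indicator_of_mem (mem_coe.mpr hi) 1]
  simp

theorem indicator_sub_smul_one_dotProduct_self (S : Finset n) (c : R) :
    ((S : Set n).indicator 1 - c • 1) ⬝ᵥ ((S : Set n).indicator 1 - c • 1)
      = #S - 2 * c * #S + c ^ 2 * Fintype.card n := by
  simp only [sub_dotProduct, dotProduct_sub, smul_dotProduct, dotProduct_smul, smul_eq_mul,
    indicator_one_dotProduct_self, dotProduct_comm 1, indicator_one_dotProduct_one,
    one_dotProduct_one]
  ring

theorem dotProduct_mulVec_sub_smul_one (hA : A.IsSymm) (hd : A *ᵥ 1 = d • 1) (f : n → R)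
    (c : R) :
    (f - c • 1) ⬝ᵥ A *ᵥ (f - c • 1) - d * ((f - c • 1) ⬝ᵥ (f - c • 1))
      = f ⬝ᵥ A *ᵥ f - d * (f ⬝ᵥ f) := by
  have h1 : 1 ⬝ᵥ A *ᵥ f = d * (1 ⬝ᵥ f) := by
    rw [dotProduct_mulVec, ← mulVec_transpose, hA.eq, hd, smul_dotProduct, smul_eq_mul]
  simp only [mulVec_sub, mulVec_smul, hd, sub_dotProduct, dotProduct_sub, smul_dotProduct,
    dotProduct_smul, smul_eq_mul, h1, dotProduct_comm f 1]
  ring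

theorem sum_sum_compl_eq_mul_card_sub_dotProduct [DecidableEq n] (hd : A *ᵥ 1 = d • 1)
    (S : Finset n) :
    ∑ s ∈ S, ∑ t ∈ Sᶜ, A s t
      = d * #S - (S : Set n).indicator 1 ⬝ᵥ A *ᵥ (S : Set n).indicator 1 := by
  have hrow : ∀ s, ∑ t, A s t = d := fun s => by
    simpa [mulVec, dotProduct] using congrFun hd s
  have hcompl : ∀ s, ∑ t ∈ Sᶜ, A s t = d - ∑ t ∈ S, A s t := fun s => by
    rw [← hrow s, ← sum_compl_add_sum S, add_sub_cancel_right]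
  have hmulVec : ∀ s, (A *ᵥ (S : Set n).indicator 1) s = ∑ t ∈ S, A s t := fun s => by
    rw [mulVec, dotProduct_comm, indicator_one_dotProduct]
  simp only [hcompl, sum_sub_distrib, sum_const, nsmul_eq_mul, indicator_one_dotProduct, hmulVec,
    mul_comm d]

theorem dotProduct_mulVec_indicator_sub_smul_one [DecidableEq n] (hA : A.IsSymm)
    (hd : A *ᵥ 1 = d • 1) (S : Finset n) (c : R) :
    ((S : Set n).indicator 1 - c • 1) ⬝ᵥ A *ᵥ ((S : Set n).indicator 1 - c • 1)
      = d * (((S : Set n).indicator 1 - c • 1) ⬝ᵥ ((S : Set n).indicator 1 - c • 1))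
        - ∑ s ∈ S, ∑ t ∈ Sᶜ, A s t := by
  rw [sum_sum_compl_eq_mul_card_sub_dotProduct hd, ← sub_eq_zero]
  have h := dotProduct_mulVec_sub_smul_one hA hd ((S : Set n).indicator 1) c
  rw [indicator_one_dotProduct_self] at h
  linear_combination h

end CommRing

theorem one_dotProduct_indicator_sub_smul_one {R n : Type*} [Field R] [Fintype n] (S : Finset n)
    (hn : (Fintype.card n : R) ≠ 0) :
    (1 : n → R) ⬝ᵥ ((S : Set n).indicator 1 - (#S / Fintype.card n : R) • 1) = 0 := by
  rw [dotProduct_sub, dotProduct_smul, dotProduct_comm, indicator_one_dotProduct_one,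
    one_dotProduct_one, smul_eq_mul, div_mul_cancel₀ _ hn, sub_self]

end Matrix

theorem Antitone.apply_le_apply_one {α : Type*} [Preorder α] {n : ℕ} {f : Fin n → α}
    (hf : Antitone f) (h1 : 1 < n) {j : Fin n} (hj : (j : ℕ) ≠ 0) : f j ≤ f ⟨1, h1⟩ :=
  hf (Fin.le_def.mpr (Nat.one_le_iff_ne_zero.mpr hj))

/-- Discrete Cheeger inequality, easy direction: for a `d`-regular graph `G` with
second-largest adjacency eigenvalue `ev 1`, every set `S` with `1 ≤ |S| ≤ n/2`
has edge expansion `|E(S, S̄)|/|S| ≥ (d − λ₂)/2`. -/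
theorem stmt3 (n d : ℕ) (hn : 2 ≤ n) (G : SimpleGraph (Fin n)) [DecidableRel G.Adj]
    (hreg : G.IsRegularOfDegree d)
    (hA : (G.adjMatrix ℝ).IsHermitian)
    (ev : Fin n → ℝ) (σ : Equiv.Perm (Fin n))
    (hev : ev = hA.eigenvalues ∘ σ) (hsort : Antitone ev)
    (S : Finset (Fin n)) (hS1 : 1 ≤ S.card) (hS2 : 2 * S.card ≤ n) :
    ((d : ℝ) - ev ⟨1, by omega⟩) / 2
      ≤ (∑ s ∈ S, ∑ t ∈ Sᶜ, G.adjMatrix ℝ s t) / S.card := by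
  have hS : (0 : ℝ) < #S := by exact_mod_cast hS1
  have hn0 : (0 : ℝ) < n := by exact_mod_cast (by omega : 0 < n)
  have hcut : 0 ≤ ∑ s ∈ S, ∑ t ∈ Sᶜ, G.adjMatrix ℝ s t :=
    sum_nonneg fun _ _ => sum_nonneg fun _ _ => by
      rw [SimpleGraph.adjMatrix_apply]; split_ifs <;> norm_num
  rcases le_or_gt (d : ℝ) (ev ⟨1, by omega⟩) with hle | hlt
  · exact (div_nonpos_of_nonpos_of_nonneg (by linarith) zero_le_two).trans (div_nonneg hcut hS.le)
  have hA1 : G.adjMatrix ℝ *ᵥ 1 = (d : ℝ) • 1 := funext fun v => by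
    simpa using G.adjMatrix_mulVec_const_apply_of_regular hreg (a := (1 : ℝ)) (v := v)
  have hμ : ∀ i ≠ σ ⟨0, by omega⟩, hA.eigenvalues i ≤ ev ⟨1, by omega⟩ := fun i hi => by
    simpa [hev] using hsort.apply_le_apply_one (by omega) (j := σ.symm i)
      (fun h => hi (σ.symm_apply_eq.mp (Fin.ext h)))
  have hperp := one_dotProduct_indicator_sub_smul_one (R := ℝ) S (by simpa using hn0.ne')
  have hspec := hA.dotProduct_mulVec_le hμ hlt hA1
    (fun h => one_ne_zero (congrFun h ⟨0, by omega⟩)) hperp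
  rw [dotProduct_mulVec_indicator_sub_smul_one G.isSymm_adjMatrix hA1,
    indicator_sub_smul_one_dotProduct_self, Fintype.card_fin] at hspec
  set c : ℝ := #S / n
  have hcn : c * n = #S := div_mul_cancel₀ _ hn0.ne'
  have hc : 2 * c ≤ 1 := by
    rw [← mul_div_assoc, div_le_one hn0]; exact_mod_cast hS2
  have hnorm : (#S : ℝ) / 2 ≤ #S - 2 * c * #S + c ^ 2 * n := by nlinarith
  rw [div_le_div_iff₀ two_pos hS]
  nlinarith [mul_le_mul_of_nonneg_left hnorm (sub_nonneg.mpr hlt.le)]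
end
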